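/- Let n : ℕ and let sd(n) be the poset of nonempty finite subsets of Fin (n+1) ordered by inclusion, regarded as a category. The functor max : sd(n) ⥤ Fin (n+1) admits a right adjoint sending j to the interval Finset.Iic j = {0, …, j} (i.e. max S ≤ j if and only if S ⊆ Iic j); this right adjoint is fully faithful (Iic j ⊆ Iic j' if and only if j ≤ j'); and consequently max exhibits Fin (n+1) as the localization of sd(n) at the class of inclusions S ⊆ T with max S = max T, which is exactly the class of morphisms that max inverts. -/
import Mathlib


open CategoryTheory

/-- The subdivision `sd([n])`: the poset of nonempty finite subsets of `Fin (n+1)`,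
ordered by inclusion, regarded as a category. -/
abbrev Sd (n : ℕ) := {S : Finset (Fin (n + 1)) // S.Nonempty}

/-- The functor `max : sd([n]) ⥤ [n]` sending a nonempty subset to its maximum. -/
def sdMax (n : ℕ) : Sd n ⥤ Fin (n + 1) where
  obj S := S.1.max' S.2
  map {S T} f := homOfLE (Finset.max'_subset S.2 (leOfHom f))
  map_id _ := rfl
  map_comp _ _ := rfl

/-- The functor `[n] ⥤ sd([n])` sending `j` to the interval `Iic j = {0, …, j}`. -/
def sdIic (n : ℕ) : Fin (n + 1) ⥤ Sd n where
  obj j := ⟨Finset.Iic j, ⟨j, Finset.mem_Iic.2 le_rfl⟩⟩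
  map {j k} f := homOfLE (by exact Finset.Iic_subset_Iic.2 (leOfHom f))
  map_id _ := rfl
  map_comp _ _ := rfl

/-- The class of inclusions `S ⊆ T` in `sd([n])` with `max S = max T`. -/
def sdWmax (n : ℕ) : MorphismProperty (Sd n) :=
  fun S T _ => S.1.max' S.2 = T.1.max' T.2


lemma sd_key (n : ℕ) (S : Sd n) (j : Fin (n + 1)) :
    S.1.max' S.2 ≤ j ↔ S.1 ⊆ Finset.Iic j := by
  constructor
  · intro h x hx
    exact Finset.mem_Iic.2 ((Finset.le_max' _ _ hx).trans h)
  · intro h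
    exact Finset.mem_Iic.1 (h (S.1.max'_mem S.2))

def sdAdj (n : ℕ) : sdMax n ⊣ sdIic n :=
  Adjunction.mkOfHomEquiv
    { homEquiv := fun S j =>
        { toFun := fun f => homOfLE ((sd_key n S j).1 (leOfHom f))
          invFun := fun f => homOfLE ((sd_key n S j).2 (leOfHom f))
          left_inv := fun _ => rfl
          right_inv := fun _ => rfl }
      homEquiv_naturality_left_symm := fun _ _ => rfl
      homEquiv_naturality_right := fun _ _ => rfl }

lemma fin_isIso {j k : Fin (n+1)} (f : j ⟶ k) : IsIso f ↔ j = k := by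
  constructor
  · intro h
    exact le_antisymm (leOfHom f) (leOfHom (inv f))
  · rintro rfl
    exact ⟨⟨𝟙 _, rfl, rfl⟩⟩

instance (n : ℕ) : (sdIic n).Full :=
  ⟨fun {j j'} f => ⟨homOfLE (Finset.Iic_subset_Iic.1 (leOfHom f)), Subsingleton.elim _ _⟩⟩

instance (n : ℕ) : (sdIic n).Faithful := ⟨fun _ => Subsingleton.elim _ _⟩

lemma sdWmax_eq (n : ℕ) :
    sdWmax n = (MorphismProperty.isomorphisms (Fin (n+1))).inverseImage (sdMax n) := by
  ext S T f
  change _ ↔ IsIso _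
  rw [fin_isIso]
  rfl

/-- `max : sd([n]) ⥤ [n]` admits a right adjoint `j ↦ Iic j` (indeed `max S ≤ j ↔ S ⊆ Iic j`),
this right adjoint is fully faithful, and consequently `max` exhibits `[n]` as the localization
of `sd([n])` at the class of inclusions `S ⊆ T` with `max S = max T`, which is exactly the class
of morphisms inverted by `max`. -/
theorem sdMax_adjunction_isLocalization (n : ℕ) :
    (∀ (S : Sd n) (j : Fin (n + 1)), S.1.max' S.2 ≤ j ↔ S.1 ⊆ Finset.Iic j) ∧
    Nonempty (sdMax n ⊣ sdIic n) ∧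
    (sdIic n).Full ∧ (sdIic n).Faithful ∧
    (∀ (j j' : Fin (n + 1)), ((sdIic n).obj j).1 ⊆ ((sdIic n).obj j').1 ↔ j ≤ j') ∧
    (sdMax n).IsLocalization (sdWmax n) ∧
    (∀ (S T : Sd n) (f : S ⟶ T), sdWmax n f ↔ IsIso ((sdMax n).map f)) := by
  refine ⟨sd_key n, ⟨sdAdj n⟩, inferInstance, inferInstance, ?_, ?_, ?_⟩
  · intro j j'
    exact Finset.Iic_subset_Iic
  · rw [sdWmax_eq]
    exact (sdAdj n).isLocalization
  · intro S T f
    rw [sdWmax_eq]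
    exact Iff.rfl
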